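/- arXiv:1606.01141 — 2 statements merged into one kernel-verified Lean document; each statement's English description precedes it below -/
import Mathlib

section
/- A function k : 𝒳 × 𝒳 → ℝ≥0 on a finite set 𝒳 is a strong kernel if and only if there exists a hierarchy (T,w) on 𝒳 such that k(x,y) = w(LCA(x,y)) for all x, y ∈ 𝒳. -/
open scoped Classical

structure Hierarchy (𝒳 : Type) where
  V : Type
  [fintypeV : Fintype V]
  leaf : 𝒳 → V
  leaf_inj : Function.Injective leaf
  root : V
  parent : V → V
  parent_root : parent root = root
  reaches_root : ∀ v : V, ∃ n : ℕ, parent^[n] v = root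
  leaf_iff : ∀ v : V, (∀ u : V, parent u = v → u = v) ↔ v ∈ Set.range leaf
  w : V → NNReal
  w_le : ∀ v : V, w (parent v) ≤ w v

attribute [instance] Hierarchy.fintypeV

namespace Hierarchy

variable {𝒳 : Type} (H : Hierarchy 𝒳)

/-- `u` is an ancestor of `v` (i.e. `u` lies on the iterated-parent path from `v` to the root). -/
def IsAncestor (v u : H.V) : Prop := ∃ n : ℕ, H.parent^[n] v = u

/-- The depth of a vertex: the number of edges on the path to the root. -/
noncomputable def depth (v : H.V) : ℕ := sInf {n : ℕ | H.parent^[n] v = H.root}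

/-- `u` is a lowest common ancestor of `x` and `y`: a common ancestor of maximal depth. -/
def IsLCA (x y u : H.V) : Prop :=
  H.IsAncestor x u ∧ H.IsAncestor y u ∧
    ∀ u' : H.V, H.IsAncestor x u' → H.IsAncestor y u' → H.depth u' ≤ H.depth u

/-- The additive weight function `ω`. -/
noncomputable def omega (v : H.V) : NNReal :=
  if v = H.root then H.w v else H.w v - H.w (H.parent v)

end Hierarchy

/-!
In a hierarchy the ancestors of a vertex form a chain, so every common ancestor of `a` and `b`
lies above their LCA. Hence `lca x y = lca y x`, and of `lca x z` and `lca z y`, both ancestors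
of `z`, the higher one is a common ancestor of `x` and `y`, whose weight is thus at most
`w (lca x y)`.

Conversely, the balls `{y | t ≤ k x y}` of a strong kernel are ultrametric: each of their
points is a centre, so two balls with a common point are nested. The nonempty balls, ordered by
inclusion and with each point hung below the smallest ball around it, form the tree. A ball is
weighted by the minimum of `k` on it; for `x ≠ y` the LCA of `x` and `y` is `{z | k x y ≤ k x z}`,
of weight `k x y`.
-/

open Function

theorem Function.exists_ne_apply_eq_of_iterate_eq {α : Type*} {f : α → α} {a b : α} {n : ℕ}
    (h : f^[n] a = b) (hab : a ≠ b) : ∃ c, c ≠ b ∧ f c = b := by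
  induction n with
  | zero => exact absurd h hab
  | succ n ih =>
    rw [iterate_succ_apply'] at h
    by_cases hb : f^[n] a = b
    · exact ih hb
    · exact ⟨_, hb, h⟩

namespace Hierarchy

variable {𝒳 : Type} (H : Hierarchy 𝒳)

theorem iterate_parent_root (n : ℕ) : H.parent^[n] H.root = H.root :=
  iterate_fixed H.parent_root n

theorem iterate_parent_depth (v : H.V) : H.parent^[H.depth v] v = H.root :=
  Nat.sInf_mem (H.reaches_root v)

theorem depth_iterate_parent_le (v : H.V) (n : ℕ) :
    H.depth (H.parent^[n] v) ≤ H.depth v - n := by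
  refine Nat.sInf_le (show H.parent^[H.depth v - n] (H.parent^[n] v) = H.root from ?_)
  have key : H.parent^[H.depth v - n] (H.parent^[n] v) =
      H.parent^[H.depth v - n + n - H.depth v] (H.parent^[H.depth v] v) := by
    rw [← iterate_add_apply, ← iterate_add_apply]
    congr 1
    omega
  rw [key, iterate_parent_depth, iterate_parent_root]

variable {H} {a b c u v : H.V}

theorem IsAncestor.refl (v : H.V) : H.IsAncestor v v := ⟨0, rfl⟩

theorem IsAncestor.trans (hab : H.IsAncestor a b) (hbc : H.IsAncestor b c) :
    H.IsAncestor a c := by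
  obtain ⟨m, rfl⟩ := hab
  obtain ⟨n, rfl⟩ := hbc
  exact ⟨n + m, iterate_add_apply _ _ _ _⟩

theorem IsAncestor.depth_le (h : H.IsAncestor v u) : H.depth u ≤ H.depth v := by
  obtain ⟨n, rfl⟩ := h
  exact (H.depth_iterate_parent_le v n).trans (Nat.sub_le _ _)

theorem IsAncestor.w_le (h : H.IsAncestor v u) : H.w u ≤ H.w v := by
  obtain ⟨n, rfl⟩ := h
  refine antitone_nat_of_succ_le (f := fun n => H.w (H.parent^[n] v)) (fun n => ?_) (Nat.zero_le n)
  simpa only [iterate_succ_apply'] using H.w_le _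

/-- Each step to the parent lowers the depth, except at the root, which is its own parent. -/
theorem IsAncestor.eq_of_depth_le (h : H.IsAncestor v u) (hd : H.depth v ≤ H.depth u) :
    u = v := by
  obtain ⟨n, rfl⟩ := h
  have := H.depth_iterate_parent_le v n
  obtain rfl | hv : n = 0 ∨ H.depth v = 0 := by omega
  · rfl
  · have hroot : v = H.root := by simpa [hv] using H.iterate_parent_depth v
    rw [hroot, iterate_parent_root]

theorem IsAncestor.antisymm (hvu : H.IsAncestor v u) (huv : H.IsAncestor u v) : u = v :=
  hvu.eq_of_depth_le huv.depth_le

theorem IsAncestor.total (ha : H.IsAncestor v a) (hb : H.IsAncestor v b) :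
    H.IsAncestor a b ∨ H.IsAncestor b a := by
  obtain ⟨m, rfl⟩ := ha
  obtain ⟨n, rfl⟩ := hb
  rcases le_total m n with hmn | hnm
  · exact .inl ⟨n - m, by rw [← iterate_add_apply, Nat.sub_add_cancel hmn]⟩
  · exact .inr ⟨m - n, by rw [← iterate_add_apply, Nat.sub_add_cancel hnm]⟩

theorem IsLCA.of_isAncestor (ha : H.IsAncestor a c) (hb : H.IsAncestor b c)
    (h : ∀ u, H.IsAncestor a u → H.IsAncestor b u → H.IsAncestor c u) : H.IsLCA a b c :=
  ⟨ha, hb, fun u hau hbu => (h u hau hbu).depth_le⟩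

theorem IsLCA.symm (h : H.IsLCA a b c) : H.IsLCA b a c :=
  ⟨h.2.1, h.1, fun u hbu hau => h.2.2 u hau hbu⟩

theorem IsLCA.isAncestor (h : H.IsLCA a b c) (ha : H.IsAncestor a u) (hb : H.IsAncestor b u) :
    H.IsAncestor c u := by
  rcases h.1.total ha with hcu | huc
  · exact hcu
  · rw [huc.eq_of_depth_le (h.2.2 u ha hb)]
    exact .refl u

theorem IsLCA.unique {c' : H.V} (h : H.IsLCA a b c) (h' : H.IsLCA a b c') : c = c' :=
  (h'.isAncestor h.1 h.2.1).antisymm (h.isAncestor h'.1 h'.2.1)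

theorem IsLCA.min_w_le {t : H.V} (hac : H.IsLCA a c u) (hcb : H.IsLCA c b v)
    (hab : H.IsLCA a b t) : min (H.w u) (H.w v) ≤ H.w t := by
  rcases hac.2.1.total hcb.1 with huv | hvu
  · exact min_le_of_right_le (hab.isAncestor (hac.1.trans huv) hcb.2.1).w_le
  · exact min_le_of_left_le (hab.isAncestor hac.1 (hcb.2.1.trans hvu)).w_le

end Hierarchy

structure IsStrongKernel {𝒳 : Type*} (k : 𝒳 → 𝒳 → NNReal) : Prop where
  symm : ∀ x y, k x y = k y x
  min_le : ∀ x y z, min (k x z) (k z y) ≤ k x y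

theorem IsStrongKernel.le_diag {𝒳 : Type*} {k : 𝒳 → 𝒳 → NNReal} (hk : IsStrongKernel k)
    (x y : 𝒳) : k x y ≤ k x x := by
  simpa [hk.symm y x] using hk.min_le x x y

noncomputable section

namespace StrongKernel

variable {𝒳 : Type} [Fintype 𝒳] (k : 𝒳 → 𝒳 → NNReal)

def ball (x : 𝒳) (t : NNReal) : Finset 𝒳 := {y | t ≤ k x y}

/-- The inner vertices of the hierarchy; nonemptiness rules out childless ones. -/
def IsCluster (C : Finset 𝒳) : Prop := C.Nonempty ∧ ∃ x t, C = ball k x t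

abbrev Cluster := {C : Finset 𝒳 // IsCluster k C}

variable {k} {x y : 𝒳} {s t : NNReal}

@[simp]
theorem mem_ball : y ∈ ball k x t ↔ t ≤ k x y := by simp [ball]

theorem ball_anti (x : 𝒳) (h : t ≤ s) : ball k x s ⊆ ball k x t := fun _ hy =>
  mem_ball.2 (h.trans (mem_ball.1 hy))

theorem ball_eq_of_mem (hk : IsStrongKernel k) (h : y ∈ ball k x t) :
    ball k y t = ball k x t := by
  rw [mem_ball] at h
  ext z
  simp only [mem_ball]
  constructor
  · exact fun hz => (le_min h hz).trans (hk.min_le x z y)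
  · exact fun hz => (le_min (h.trans_eq (hk.symm x y)) hz).trans (hk.min_le y z x)

namespace Cluster

def span (x y : 𝒳) : Cluster k := ⟨ball k x (k x y), ⟨y, mem_ball.2 le_rfl⟩, x, _, rfl⟩

def univ [Nonempty 𝒳] : Cluster k :=
  ⟨Finset.univ, Finset.univ_nonempty, Classical.arbitrary 𝒳, 0, by ext; simp⟩

def parent (C : Cluster k) : Cluster k :=
  if h : ∃ D, IsLeast {D | C < D} D then h.choose else C

def weight (C : Cluster k) : NNReal :=
  (C.1 ×ˢ C.1).inf' (C.2.1.product C.2.1) fun p => k p.1 p.2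

variable {C D : Cluster k}

theorem le_parent (C : Cluster k) : C ≤ C.parent := by
  unfold parent
  split_ifs with h
  · exact h.choose_spec.1.le
  · exact le_rfl

theorem parent_univ [Nonempty 𝒳] : (univ : Cluster k).parent = univ := by
  refine dif_neg fun ⟨D, (hD : univ < D), _⟩ => not_lt_of_ge ?_ hD
  exact Finset.subset_univ D.1

theorem weight_le (hx : x ∈ C.1) (hy : y ∈ C.1) : C.weight ≤ k x y :=
  Finset.inf'_le (f := fun p : 𝒳 × 𝒳 => k p.1 p.2) (b := (x, y))
    (Finset.mem_product.2 ⟨hx, hy⟩)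

theorem weight_antitone : Antitone (weight (k := k)) := fun _ _ h =>
  Finset.inf'_mono _ (Finset.product_subset_product h h) _

theorem mem_span_left (hk : IsStrongKernel k) (x y : 𝒳) : x ∈ (span x y : Cluster k).1 :=
  mem_ball.2 (hk.le_diag x y)

theorem mem_span_right (x y : 𝒳) : y ∈ (span x y : Cluster k).1 :=
  mem_ball.2 le_rfl

theorem weight_span (hk : IsStrongKernel k) (x y : 𝒳) : (span x y : Cluster k).weight = k x y := by
  refine le_antisymm (weight_le (mem_span_left hk x y) (mem_span_right x y)) ?_
  refine Finset.le_inf' _ _ fun p hp => ?_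
  obtain ⟨hp₁, hp₂⟩ := Finset.mem_product.1 hp
  have hp₂ : p.2 ∈ ball k x (k x y) := hp₂
  rw [← ball_eq_of_mem hk hp₁] at hp₂
  exact mem_ball.1 hp₂

theorem span_le (hk : IsStrongKernel k) (hx : x ∈ C.1) (hy : y ∈ C.1) : span x y ≤ C := by
  obtain ⟨-, z, t, hC⟩ := C.2
  rw [hC] at hx hy
  rw [← ball_eq_of_mem hk hx] at hy
  show ball k x (k x y) ⊆ C.1
  rw [hC, ← ball_eq_of_mem hk hx]
  exact ball_anti x (mem_ball.1 hy)

theorem le_total_of_mem (hk : IsStrongKernel k) (hC : x ∈ C.1) (hD : x ∈ D.1) :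
    C ≤ D ∨ D ≤ C := by
  obtain ⟨-, _, s, hCs⟩ := C.2
  obtain ⟨-, _, t, hDt⟩ := D.2
  rw [hCs] at hC
  rw [hDt] at hD
  show C.1 ⊆ D.1 ∨ D.1 ⊆ C.1
  rw [hCs, hDt, ← ball_eq_of_mem hk hC, ← ball_eq_of_mem hk hD]
  exact (le_total t s).imp (ball_anti x) (ball_anti x)

theorem isLeast_parent (hk : IsStrongKernel k) (h : ∃ D, C < D) : IsLeast {D | C < D} C.parent := by
  have hex : ∃ D, IsLeast {D | C < D} D := by
    obtain ⟨D, hCD, hmin⟩ := (Set.toFinite {D | C < D}).exists_minimal h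
    refine ⟨D, hCD, fun E (hCE : C < E) => ?_⟩
    obtain ⟨x, hx⟩ := C.2.1
    have hxD : x ∈ D.1 := (le_of_lt hCD : C.1 ⊆ D.1) hx
    have hxE : x ∈ E.1 := (le_of_lt hCE : C.1 ⊆ E.1) hx
    exact (le_total_of_mem hk hxD hxE).elim id (hmin hCE)
  unfold parent
  rw [dif_pos hex]
  exact hex.choose_spec

theorem exists_iterate_parent_eq (hk : IsStrongKernel k) (h : C ≤ D) : ∃ n, parent^[n] C = D := by
  induction C using WellFoundedGT.induction with
  | _ C ih =>
  rcases h.eq_or_lt with rfl | hCD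
  · exact ⟨0, rfl⟩
  · obtain ⟨hC, hleast⟩ := isLeast_parent hk ⟨D, hCD⟩
    obtain ⟨n, hn⟩ := ih _ hC (hleast hCD)
    exact ⟨n + 1, hn⟩

end Cluster

def vertexParent : 𝒳 ⊕ Cluster k → 𝒳 ⊕ Cluster k
  | .inl x => .inr (Cluster.span x x)
  | .inr C => .inr C.parent

def vertexWeight : 𝒳 ⊕ Cluster k → NNReal :=
  Sum.elim (fun x => k x x) Cluster.weight

variable {C D : Cluster k}

theorem iterate_vertexParent_inr (n : ℕ) (C : Cluster k) :
    vertexParent^[n] (.inr C) = .inr (Cluster.parent^[n] C) :=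
  ((Semiconj.iterate_right (f := Sum.inr) (fun _ => rfl) n) C).symm

theorem exists_iterate_vertexParent_inr (hk : IsStrongKernel k) (h : C ≤ D) :
    ∃ n, vertexParent^[n] (.inr C) = .inr D := by
  obtain ⟨n, hn⟩ := Cluster.exists_iterate_parent_eq hk h
  exact ⟨n, by rw [iterate_vertexParent_inr, hn]⟩

theorem exists_iterate_vertexParent_inl_iff (hk : IsStrongKernel k) {v : 𝒳 ⊕ Cluster k} :
    (∃ n, vertexParent^[n] (.inl x) = v) ↔ v = .inl x ∨ ∃ D : Cluster k, v = .inr D ∧ x ∈ D.1 := by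
  constructor
  · rintro ⟨_ | n, rfl⟩
    · exact .inl rfl
    · refine .inr ⟨_, iterate_vertexParent_inr n _, ?_⟩
      exact id_le_iterate_of_id_le Cluster.le_parent n _ (Cluster.mem_span_left hk x x)
  · rintro (rfl | ⟨D, rfl, hxD⟩)
    · exact ⟨0, rfl⟩
    · obtain ⟨n, hn⟩ := exists_iterate_vertexParent_inr hk (Cluster.span_le hk hxD hxD)
      exact ⟨n + 1, hn⟩

theorem vertexParent_ne_inl (v : 𝒳 ⊕ Cluster k) (x : 𝒳) : vertexParent v ≠ .inl x := by
  cases v <;> simp [vertexParent]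

/-- Follow the path up from any point of the cluster. -/
theorem exists_vertexParent_eq_inr (hk : IsStrongKernel k) (C : Cluster k) :
    ∃ v, v ≠ .inr C ∧ vertexParent v = .inr C := by
  obtain ⟨x, hx⟩ := C.2.1
  obtain ⟨n, hn⟩ := (exists_iterate_vertexParent_inl_iff hk).2 (.inr ⟨C, rfl, hx⟩)
  exact exists_ne_apply_eq_of_iterate_eq hn Sum.inl_ne_inr

theorem vertexWeight_vertexParent_le (hk : IsStrongKernel k) (v : 𝒳 ⊕ Cluster k) :
    vertexWeight (vertexParent v) ≤ vertexWeight v := by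
  rcases v with x | C
  · exact (Cluster.weight_span hk x x).le
  · exact Cluster.weight_antitone (Cluster.le_parent C)

variable (k) in
def lca (x y : 𝒳) : 𝒳 ⊕ Cluster k :=
  if x = y then .inl x else .inr (Cluster.span x y)

theorem vertexWeight_lca (hk : IsStrongKernel k) (x y : 𝒳) : vertexWeight (lca k x y) = k x y := by
  unfold lca
  split_ifs with hxy
  · rw [hxy]; rfl
  · exact Cluster.weight_span hk x y

variable [Nonempty 𝒳]

def hierarchy (hk : IsStrongKernel k) : Hierarchy 𝒳 where
  V := 𝒳 ⊕ Cluster k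
  leaf := Sum.inl
  leaf_inj := Sum.inl_injective
  root := .inr Cluster.univ
  parent := vertexParent
  parent_root := congrArg Sum.inr Cluster.parent_univ
  reaches_root
    | .inl x => (exists_iterate_vertexParent_inl_iff hk).2 (.inr ⟨_, rfl, Finset.mem_univ x⟩)
    | .inr C => exists_iterate_vertexParent_inr hk (Finset.subset_univ C.1)
  leaf_iff
    | .inl x => iff_of_true (fun u hu => absurd hu (vertexParent_ne_inl u x)) ⟨x, rfl⟩
    | .inr C => by
      refine iff_of_false (fun h => ?_) (by simp)
      obtain ⟨v, hv, hvC⟩ := exists_vertexParent_eq_inr hk C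
      exact hv (h v hvC)
  w := vertexWeight
  w_le := vertexWeight_vertexParent_le hk

theorem isAncestor_inl_iff (hk : IsStrongKernel k) {v : (hierarchy hk).V} :
    (hierarchy hk).IsAncestor (.inl x) v ↔ v = .inl x ∨ ∃ D : Cluster k, v = .inr D ∧ x ∈ D.1 :=
  exists_iterate_vertexParent_inl_iff hk

theorem isLCA_lca (hk : IsStrongKernel k) (x y : 𝒳) :
    (hierarchy hk).IsLCA (.inl x) (.inl y) (lca k x y) := by
  unfold lca
  split_ifs with hxy
  · subst hxy
    exact .of_isAncestor (.refl _) (.refl _) fun u hu _ => hu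
  refine .of_isAncestor ((isAncestor_inl_iff hk).2 (.inr ⟨_, rfl, Cluster.mem_span_left hk x y⟩))
    ((isAncestor_inl_iff hk).2 (.inr ⟨_, rfl, Cluster.mem_span_right x y⟩)) fun u hxu hyu => ?_
  rcases (isAncestor_inl_iff hk).1 hxu, (isAncestor_inl_iff hk).1 hyu with
    ⟨rfl | ⟨D, rfl, hxD⟩, h | ⟨D', h, hyD'⟩⟩
  · exact absurd (Sum.inl_injective h) hxy
  · exact absurd h Sum.inl_ne_inr
  · exact absurd h.symm Sum.inl_ne_inr
  · obtain rfl := Sum.inr_injective h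
    exact exists_iterate_vertexParent_inr hk (Cluster.span_le hk hxD hyD')

end StrongKernel

end

/-- A function `k : 𝒳 × 𝒳 → ℝ≥0` on a (nonempty) finite set is a strong
kernel if and only if it is induced by a hierarchy `(T, w)` on `𝒳`, i.e.
`k x y = w (LCA x y)`. -/
theorem strong_iff_hierarchy_induced {𝒳 : Type} [Fintype 𝒳] [Nonempty 𝒳]
    (k : 𝒳 → 𝒳 → NNReal) :
    ((∀ x y : 𝒳, k x y = k y x) ∧ ∀ x y z : 𝒳, min (k x z) (k z y) ≤ k x y)
      ↔ ∃ H : Hierarchy 𝒳, ∃ lca : 𝒳 → 𝒳 → H.V,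
          (∀ x y : 𝒳, H.IsLCA (H.leaf x) (H.leaf y) (lca x y)) ∧
          ∀ x y : 𝒳, k x y = H.w (lca x y) := by
  constructor
  · rintro ⟨hsymm, hmin⟩
    have hk : IsStrongKernel k := ⟨hsymm, hmin⟩
    exact ⟨StrongKernel.hierarchy hk, StrongKernel.lca k, StrongKernel.isLCA_lca hk,
      fun x y => (StrongKernel.vertexWeight_lca hk x y).symm⟩
  · rintro ⟨H, lca, hlca, hk⟩
    refine ⟨fun x y => by rw [hk, hk, (hlca x y).symm.unique (hlca y x)], fun x y z => ?_⟩
    simpa only [hk] using (hlca x z).min_w_le (hlca z y) (hlca x y)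
end

section
/- The Weisfeiler-Lehman optimal assignment kernel is positive semidefinite: let 𝒱 be a finite set, h ∈ ℕ, and ℓ₀, …, ℓ_h : 𝒱 → C a refining sequence of colourings (ℓ_{i+1}(u) = ℓ_{i+1}(v) implies ℓ_i(u) = ℓ_i(v)). Define the base kernel k(u,v) = |{i ∈ {0,…,h} : ℓ_i(u) = ℓ_i(v)}|. Then for every n ∈ ℕ and every finite family V₁, …, V_m of n-element subsets of 𝒱, the m × m matrix with entries M_{jl} = max over bijections B from V_j to V_l of Σ_{u ∈ V_j} k(u, B(u)) is positive semidefinite. -/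
open scoped Classical
open Finset Matrix

/-!
Under refinement the levels at which two vertices agree form an initial segment of `0, …, h`,
so `k u v ≤ i ↔ ℓ i u ≠ ℓ i v`. Hence the optimal assignment value equals the histogram
intersection `∑ i, ∑ colours, min (count in X, count in Y)`: a bijection cannot match more
vertices of a common level-`i` colour than this minimum, and the greedy matching, which
repeatedly pairs two vertices of maximal kernel value, loses nothing at any level. The histogram
intersection is a sum of min kernels `min a b = #({0, …, a - 1} ∩ {0, …, b - 1})`, i.e. of Gram
matrices of indicator vectors, hence positive semidefinite.
-/

theorem Multiset.toEnumFinset_inter {α : Type*} [DecidableEq α] (s t : Multiset α) :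
    (s ∩ t).toEnumFinset = s.toEnumFinset ∩ t.toEnumFinset := by
  ext p
  simp [Multiset.count_inter]

theorem Multiset.erase_inter_erase {α : Type*} [DecidableEq α] (s t : Multiset α) (a : α) :
    s.erase a ∩ t.erase a = (s ∩ t).erase a := by
  ext x
  by_cases hx : x = a
  · subst hx; simp [Multiset.count_inter, Multiset.count_erase_self]; omega
  · simp [Multiset.count_inter, Multiset.count_erase_of_ne hx]

theorem Multiset.erase_inter_erase_of_notMem {α : Type*} [DecidableEq α] {s t : Multiset α}
    {a b : α} (ha : a ∉ t) (hb : b ∉ s) : s.erase a ∩ t.erase b = s ∩ t := by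
  have hta := Multiset.count_eq_zero.2 ha
  have hsb := Multiset.count_eq_zero.2 hb
  ext x
  simp only [Multiset.count_inter]
  by_cases hxa : x = a <;> by_cases hxb : x = b <;> subst_vars <;>
    simp [Multiset.count_erase_self, Multiset.count_erase_of_ne, *]

theorem card_filter_eq_le_card_map_inter {κ α : Type*} [Fintype κ] [DecidableEq α]
    (f g : κ → α) :
    #{x | f x = g x} ≤ Multiset.card (univ.val.map f ∩ univ.val.map g) := by
  let S : Finset κ := {x | f x = g x}
  have hfg : S.val.map f = S.val.map g := Multiset.map_congr rfl fun x hx => (mem_filter.1 hx).2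
  have hle : ∀ φ : κ → α, S.val.map φ ≤ univ.val.map φ := fun φ =>
    Multiset.map_le_map (Multiset.filter_le _ _)
  simpa using Multiset.card_le_card (Multiset.le_inter (hle f) (hfg ▸ hle g))

theorem Matrix.posSemidef_card_inter {ι β : Type*} [Fintype ι] [DecidableEq β]
    (E : ι → Finset β) : (Matrix.of fun j l => (#(E j ∩ E l) : ℝ)).PosSemidef := by
  let U := univ.biUnion E
  let A : Matrix ι U ℝ := .of fun j p => if (p : β) ∈ E j then 1 else 0
  convert posSemidef_self_mul_conjTranspose A using 1
  ext j l
  have hU : E j ∩ E l ⊆ U := fun p hp => mem_biUnion.2 ⟨j, mem_univ _, (mem_inter.1 hp).1⟩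
  simp only [of_apply, mul_apply, conjTranspose_apply, star_trivial, A, ite_zero_mul_ite_zero,
    mul_one]
  rw [sum_coe_sort U (fun p => if p ∈ E j ∧ p ∈ E l then (1 : ℝ) else 0), sum_boole]
  congr 2
  ext p
  simpa using fun hj hl => hU (mem_inter_of_mem hj hl)

theorem Matrix.posSemidef_card_multiset_inter {ι α : Type*} [Fintype ι] [DecidableEq α]
    (s : ι → Multiset α) :
    (Matrix.of fun j l => (Multiset.card (s j ∩ s l) : ℝ)).PosSemidef := by
  simpa [← Multiset.card_toEnumFinset, Multiset.toEnumFinset_inter] using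
    posSemidef_card_inter fun j => (s j).toEnumFinset

namespace WeisfeilerLehman

variable {𝒱 C : Type*} (h : ℕ) (ℓ : ℕ → 𝒱 → C)

def IsRefining : Prop :=
  ∀ i < h, ∀ u v : 𝒱, ℓ (i + 1) u = ℓ (i + 1) v → ℓ i u = ℓ i v

noncomputable def baseKernel (u v : 𝒱) : ℕ :=
  #{i ∈ range (h + 1) | ℓ i u = ℓ i v}

noncomputable def histogramIntersection (X Y : Finset 𝒱) : ℕ :=
  ∑ i ∈ range (h + 1), Multiset.card (X.val.map (ℓ i) ∩ Y.val.map (ℓ i))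

variable {h ℓ}

theorem IsRefining.eq_of_le (hr : IsRefining h ℓ) {u v : 𝒱} {i j : ℕ} (hji : j ≤ i)
    (hi : i ≤ h) (he : ℓ i u = ℓ i v) : ℓ j u = ℓ j v := by
  induction i, hji using Nat.le_induction with
  | base => exact he
  | succ i _ ih => exact ih (by omega) (hr i (by omega) u v he)

theorem baseKernel_le_iff (hr : IsRefining h ℓ) {u v : 𝒱} {i : ℕ} (hi : i ≤ h) :
    baseKernel h ℓ u v ≤ i ↔ ℓ i u ≠ ℓ i v := by
  constructor
  · intro hk he
    have hsub : range (i + 1) ⊆ {j ∈ range (h + 1) | ℓ j u = ℓ j v} := fun j hj => by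
      simp only [mem_range, mem_filter] at hj ⊢
      exact ⟨by omega, hr.eq_of_le (by omega) hi he⟩
    have := card_le_card hsub
    rw [card_range] at this
    exact Nat.not_succ_le_self i (this.trans hk)
  · intro hne
    have hsub : {j ∈ range (h + 1) | ℓ j u = ℓ j v} ⊆ range i := fun j hj => by
      simp only [mem_range, mem_filter] at hj ⊢
      by_contra hij
      exact hne (hr.eq_of_le (by omega) (by omega) hj.2)
    simpa [baseKernel] using card_le_card hsub

theorem baseKernel_eq_sum (u v : 𝒱) :
    baseKernel h ℓ u v = ∑ i ∈ range (h + 1), if ℓ i u = ℓ i v then 1 else 0 :=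
  card_filter _ _

theorem sum_baseKernel_le_histogramIntersection {X Y : Finset 𝒱}
    (B : {u // u ∈ X} ≃ {u // u ∈ Y}) :
    ∑ u : {u // u ∈ X}, baseKernel h ℓ u (B u) ≤ histogramIntersection h ℓ X Y := by
  simp only [baseKernel_eq_sum, histogramIntersection]
  rw [sum_comm]
  refine sum_le_sum fun i _ => ?_
  have hX : univ.val.map (fun u : {u // u ∈ X} => ℓ i u) = X.val.map (ℓ i) := by
    rw [univ_eq_attach, attach_val]
    exact Multiset.attach_map_val' _ _
  have hY : univ.val.map (fun u => ℓ i (B u)) = Y.val.map (ℓ i) := by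
    change univ.val.map ((fun w : {u // u ∈ Y} => ℓ i w) ∘ B) = _
    rw [← Multiset.map_map, Multiset.map_univ_val_equiv, univ_eq_attach, attach_val]
    exact Multiset.attach_map_val' _ _
  rw [← card_filter, ← hX, ← hY]
  exact card_filter_eq_le_card_map_inter (fun u : {u // u ∈ X} => ℓ i u) (fun u => ℓ i (B u))

theorem histogramIntersection_le_add_erase (hr : IsRefining h ℓ) {X Y : Finset 𝒱} {u v : 𝒱}
    (hu : u ∈ X) (hv : v ∈ Y)
    (hmax : ∀ u' ∈ X, ∀ v' ∈ Y, baseKernel h ℓ u' v' ≤ baseKernel h ℓ u v) :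
    histogramIntersection h ℓ X Y ≤
      baseKernel h ℓ u v + histogramIntersection h ℓ (X.erase u) (Y.erase v) := by
  rw [baseKernel_eq_sum, histogramIntersection, histogramIntersection, ← sum_add_distrib]
  refine sum_le_sum fun i hi => ?_
  have hih : i ≤ h := Nat.lt_succ_iff.1 (mem_range.1 hi)
  rw [erase_val, erase_val, Multiset.map_erase_of_mem _ _ hu, Multiset.map_erase_of_mem _ _ hv]
  by_cases he : ℓ i u = ℓ i v
  · rw [if_pos he, he, Multiset.erase_inter_erase]
    simpa [add_comm] using Multiset.card_le_card (Multiset.le_cons_erase _ (ℓ i v))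
  · have hk := (baseKernel_le_iff hr hih).2 he
    rw [if_neg he, zero_add, Multiset.erase_inter_erase_of_notMem]
    · simp only [Multiset.mem_map, mem_val, not_exists, not_and]
      exact fun v' hv' => ((baseKernel_le_iff hr hih).1 ((hmax u hu v' hv').trans hk)).symm
    · simp only [Multiset.mem_map, mem_val, not_exists, not_and]
      exact fun u' hu' => (baseKernel_le_iff hr hih).1 ((hmax u' hu' v hv).trans hk)

theorem exists_bijOn_histogramIntersection_le (hr : IsRefining h ℓ) {X Y : Finset 𝒱}
    (hXY : #X = #Y) : ∃ f : 𝒱 → 𝒱, Set.BijOn f X Y ∧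
      histogramIntersection h ℓ X Y ≤ ∑ u ∈ X, baseKernel h ℓ u (f u) := by
  induction hn : #X generalizing X Y with
  | zero =>
    obtain rfl := card_eq_zero.1 hn
    obtain rfl := card_eq_zero.1 (hXY ▸ hn)
    exact ⟨id, by simp, by simp [histogramIntersection]⟩
  | succ n ih =>
    obtain ⟨⟨u, v⟩, huv, hmax⟩ := (X ×ˢ Y).exists_max_image (fun p => baseKernel h ℓ p.1 p.2)
      (nonempty_product.2 ⟨card_pos.1 (by omega), card_pos.1 (by omega)⟩)
    obtain ⟨hu, hv⟩ := mem_product.1 huv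
    have hmax' : ∀ u' ∈ X, ∀ v' ∈ Y, baseKernel h ℓ u' v' ≤ baseKernel h ℓ u v :=
      fun u' hu' v' hv' => hmax (u', v') (mem_product.2 ⟨hu', hv'⟩)
    obtain ⟨f, hf, hle⟩ := ih (X := X.erase u) (Y := Y.erase v)
      (by rw [card_erase_of_mem hu, card_erase_of_mem hv, hXY])
      (by rw [card_erase_of_mem hu, hn, Nat.add_sub_cancel])
    refine ⟨Function.update f u v, ?_, ?_⟩
    · have hf' : Set.BijOn (Function.update f u v) (X.erase u) (Y.erase v) :=
        hf.congr fun x hx => (Function.update_of_ne (ne_of_mem_erase hx) _ _).symm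
      have := hf'.insert (a := u) (by simp)
      rwa [Function.update_self, ← coe_insert, ← coe_insert, insert_erase hu, insert_erase hv]
        at this
    · rw [← add_sum_erase X _ hu, Function.update_self,
        sum_congr rfl fun x hx => by rw [Function.update_of_ne (ne_of_mem_erase hx)]]
      exact (histogramIntersection_le_add_erase hr hu hv hmax').trans (Nat.add_le_add_left hle _)

theorem iSup_sum_baseKernel_eq (hr : IsRefining h ℓ) {X Y : Finset 𝒱} (hXY : #X = #Y) :
    ⨆ B : {u // u ∈ X} ≃ {u // u ∈ Y}, ∑ u : {u // u ∈ X}, (baseKernel h ℓ u (B u) : NNReal) =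
      histogramIntersection h ℓ X Y := by
  obtain ⟨f, hf, hle⟩ := exists_bijOn_histogramIntersection_le hr hXY
  have : Nonempty ({u // u ∈ X} ≃ {u // u ∈ Y}) := ⟨hf.equiv⟩
  refine le_antisymm (ciSup_le fun B => ?_) ?_
  · exact_mod_cast sum_baseKernel_le_histogramIntersection B
  · refine le_ciSup_of_le (Set.finite_range _).bddAbove hf.equiv ?_
    rw [← Nat.cast_sum, Nat.cast_le]
    exact hle.trans_eq (sum_coe_sort X _).symm

theorem posSemidef_histogramIntersection {ι : Type*} [Fintype ι] (V : ι → Finset 𝒱) :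
    (Matrix.of fun j l => (histogramIntersection h ℓ (V j) (V l) : ℝ)).PosSemidef := by
  have : (Matrix.of fun j l => (histogramIntersection h ℓ (V j) (V l) : ℝ)) =
      ∑ i ∈ range (h + 1), Matrix.of fun j l =>
        (Multiset.card ((V j).val.map (ℓ i) ∩ (V l).val.map (ℓ i)) : ℝ) := by
    ext j l
    simp [histogramIntersection, Matrix.sum_apply]
  rw [this]
  exact posSemidef_sum _ fun i _ => posSemidef_card_multiset_inter _

end WeisfeilerLehman

open WeisfeilerLehman in
/-- The Weisfeiler-Lehman optimal assignment kernel is positive semidefinite: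
with base kernel `k u v = |{i ≤ h : ℓ i u = ℓ i v}|` for a refining sequence of colourings,
the optimal assignment matrix over any family of `n`-element vertex subsets satisfies
`cᵀ M c ≥ 0` for every real vector `c`. -/
theorem wl_optimal_assignment_kernel_psd {𝒱 C : Type} [Fintype 𝒱]
    (h : ℕ) (ℓ : ℕ → 𝒱 → C)
    (href : ∀ i < h, ∀ u v : 𝒱, ℓ (i + 1) u = ℓ (i + 1) v → ℓ i u = ℓ i v)
    (n m : ℕ) (V : Fin m → Finset 𝒱) (hcard : ∀ j, (V j).card = n)
    (c : Fin m → ℝ) :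
    0 ≤ ∑ j : Fin m, ∑ l : Fin m,
        c j *
          (((⨆ B : {u // u ∈ V j} ≃ {u // u ∈ V l},
              ∑ u : {u // u ∈ V j},
                (((Finset.range (h + 1)).filter
                    fun i => ℓ i (u : 𝒱) = ℓ i ((B u : 𝒱))).card : NNReal)) : NNReal) : ℝ) *
          c l := by
  have hM := posSemidef_histogramIntersection (h := h) (ℓ := ℓ) V
  refine (hM.dotProduct_mulVec_nonneg c).trans_eq ?_
  simp only [dotProduct, mulVec, Matrix.of_apply, star_trivial, mul_sum]
  refine sum_congr rfl fun j _ => sum_congr rfl fun l _ => ?_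
  have hentry := iSup_sum_baseKernel_eq href (X := V j) (Y := V l) (by rw [hcard, hcard])
  unfold baseKernel at hentry
  rw [hentry, NNReal.coe_natCast]
  ring
end
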